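/- Let (W,S) be a Coxeter system, w ∈ W separated, and u ⋖ v a Bruhat covering relation with u, v ≤ w (ℓ(v) = ℓ(u) + 1). Then either u and v lie in the same double coset W_{D_L(w)}·W_{D_R(w)} and side_w(v) = side_w(u) + 1, or they lie in different double cosets and side_w(u) = side_w(v). In particular side_w is weakly increasing on B(w) when w is separated. -/

import Mathlib

/-!
A Bruhat cover `u ⋖ v` is `u = t v` for a reflection `t`, so by the strong exchange property
(proved through a permutation representation of `W` on `W × ZMod 2` that counts reflections in
inversion sequences mod 2) `u` is obtained by deleting one letter from any reduced word of `v`.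
An element `m` without descents in `I = D_L(w)`, `J = D_R(w)` factors every `z ∈ W_I m W_J` as
`z = x m y` with lengths adding up (Deodhar's lemma), so `v` has a reduced word `ξ μ υ` with `ξ`
in `I`, `υ` in `J` and `μ` a word for `P_↓(v)`. If `u` leaves the coset of `v`, the deleted
letter lies in `μ`, so `u = x p y` with `p ≤ P_↓(v)` and `ℓ(u) - ℓ(p) = ℓ(v) - ℓ(P_↓(v))`.
Separation makes `p = P_↓(u)`: by the subword property an element below `w` without descents in
`I`, `J` is a subword of the middle part of such a word for `w`, so no `s ∈ I ∪ J` lies below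
`P_↓(v)`, nor below `p`, and hence `p` has no descents in `I` or `J` either.
-/

open CoxeterSystem List

variable {B W : Type*} [Group W] {M : CoxeterMatrix B}

namespace CoxeterBruhat

/-- One edge in the Bruhat graph: `v = t * u` for a reflection `t`, with `ℓ(u) < ℓ(v)`. -/
def Step (cs : CoxeterSystem M W) (u v : W) : Prop :=
  ∃ t : W, cs.IsReflection t ∧ v = t * u ∧ cs.length u < cs.length v

/-- The Bruhat order, as the reflexive-transitive closure of `Step`. -/
def BruhatLE (cs : CoxeterSystem M W) : W → W → Prop :=
  Relation.ReflTransGen (Step cs)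

/-- The standard parabolic subgroup generated by the simple reflections indexed by `I`. -/
def parabolic (cs : CoxeterSystem M W) (I : Set B) : Subgroup W :=
  Subgroup.closure (cs.simple '' I)

/-- The left descent set `D_L(w)`. -/
def leftDescents (cs : CoxeterSystem M W) (w : W) : Set B :=
  {i | cs.IsLeftDescent w i}

/-- The right descent set `D_R(w)`. -/
def rightDescents (cs : CoxeterSystem M W) (w : W) : Set B :=
  {i | cs.IsRightDescent w i}

/-- The double coset `W_I u W_J` as a set. -/
def doubleCoset (cs : CoxeterSystem M W) (I J : Set B) (u : W) : Set W :=
  {v | ∃ x ∈ parabolic cs I, ∃ y ∈ parabolic cs J, v = x * u * y}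

/-- The Bruhat coset `C_w(u) = W_{D_L(w)} u W_{D_R(w)}`. -/
def bCoset (cs : CoxeterSystem M W) (w u : W) : Set W :=
  doubleCoset cs (leftDescents cs w) (rightDescents cs w) u

/-- The lower Bruhat interval `B(w) = [e, w]`. -/
def lowerInterval (cs : CoxeterSystem M W) (w : W) : Set W :=
  {v | BruhatLE cs v w}

/-- The support `S(v)` of `v`: simple reflections below `v` in Bruhat order. -/
def support (cs : CoxeterSystem M W) (v : W) : Set B :=
  {i | BruhatLE cs (cs.simple i) v}

section ParityRepresentation

variable (cs : CoxeterSystem M W)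

theorem simple_mul_mul_simple_eq_simple_iff (i : B) (x : W) :
    cs.simple i * x * cs.simple i = cs.simple i ↔ x = cs.simple i := by
  rw [mul_assoc, mul_eq_left, mul_eq_one_iff_eq_inv, inv_simple]

theorem getElem_leftInvSeq_alternatingWord_eq_pow (i i' : B) (p k : ℕ) (h : k < 2 * p) :
    (cs.leftInvSeq (alternatingWord i i' (2 * p)))[k]'(by simpa using h) =
      cs.simple i * (cs.simple i' * cs.simple i) ^ k := by
  rw [getElem_leftInvSeq_alternatingWord cs i i' p k h, prod_alternatingWord_eq_mul_pow]
  simp [show (2 * k + 1) / 2 = k by omega]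

variable [DecidableEq W]

def parityPerm (i : B) : Equiv.Perm (W × ZMod 2) :=
  Function.Involutive.toPerm
    (fun p => (cs.simple i * p.1 * cs.simple i, p.2 + if p.1 = cs.simple i then 1 else 0))
    (by
      rintro ⟨x, e⟩
      simp only [simple_mul_mul_simple_eq_simple_iff, Prod.mk.injEq, add_assoc, ← two_mul]
      refine ⟨by simp [mul_assoc], ?_⟩
      split_ifs <;> simp [show (2 : ZMod 2) = 0 from rfl])

theorem parityPerm_apply (i : B) (x : W) (e : ZMod 2) :
    parityPerm cs i (x, e) =
      (cs.simple i * x * cs.simple i, e + if x = cs.simple i then 1 else 0) := rfl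

theorem prod_map_parityPerm_apply (ω : List B) (x : W) (e : ZMod 2) :
    (ω.map (parityPerm cs)).prod (x, e) =
      (cs.wordProd ω * x * (cs.wordProd ω)⁻¹,
        e + ((cs.leftInvSeq ω).count (cs.wordProd ω * x * (cs.wordProd ω)⁻¹) : ZMod 2)) := by
  induction ω with
  | nil => simp
  | cons i ω ih =>
    set y := cs.wordProd ω * x * (cs.wordProd ω)⁻¹
    have hconj : cs.wordProd (i :: ω) * x * (cs.wordProd (i :: ω))⁻¹ =
        MulAut.conj (cs.simple i) y := by
      simp [y, wordProd_cons, mul_assoc]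
    rw [List.map_cons, List.prod_cons, Equiv.Perm.mul_apply, ih, parityPerm_apply, hconj,
      leftInvSeq, List.count_cons, List.count_map_of_injective _ _ (MulAut.conj _).injective]
    simp only [MulAut.conj_apply, inv_simple, Prod.mk.injEq, true_and, beq_iff_eq,
      simple_mul_mul_simple_eq_simple_iff, eq_comm (a := cs.simple i)]
    split_ifs <;> push_cast <;> ring

theorem parityPerm_mul_pow (i i' : B) (p : ℕ) :
    (parityPerm cs i * parityPerm cs i') ^ p =
      ((alternatingWord i i' (2 * p)).map (parityPerm cs)).prod := by
  induction p with
  | zero => simp [alternatingWord]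
  | succ p ih =>
    rw [pow_succ', ih, show 2 * (p + 1) = 2 * p + 1 + 1 by ring, alternatingWord_succ',
      alternatingWord_succ']
    simp [mul_assoc]

theorem count_leftInvSeq_braid (i i' : B) (y : W) :
    ((cs.leftInvSeq (alternatingWord i i' (2 * M i i'))).count y : ZMod 2) = 0 := by
  set L := cs.leftInvSeq (alternatingWord i i' (2 * M i i'))
  have hL : L.length = 2 * M i i' := by simp [L]
  -- `L` has period `M i i'`, because `(s_{i'} s_i) ^ M i i' = 1`
  have hdrop : L.drop (M i i') = L.take (M i i') := by
    refine List.ext_getElem (by simp [hL]; omega) fun k hk _ => ?_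
    have hk' : k < M i i' := by simp [hL] at hk; omega
    rw [List.getElem_drop, List.getElem_take, getElem_leftInvSeq_alternatingWord_eq_pow,
      getElem_leftInvSeq_alternatingWord_eq_pow, pow_add, cs.simple_mul_simple_pow', one_mul]
    all_goals omega
  rw [← List.take_append_drop (M i i') L, hdrop, List.count_append, Nat.cast_add, ← two_mul]
  simp [show (2 : ZMod 2) = 0 from rfl]

theorem isLiftable_parityPerm : M.IsLiftable (parityPerm cs) := by
  intro i i'
  rw [parityPerm_mul_pow]
  ext ⟨x, e⟩ : 1
  have hprod : cs.wordProd (alternatingWord i i' (2 * M i i')) = 1 := by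
    simp [prod_alternatingWord_eq_mul_pow]
  rw [prod_map_parityPerm_apply, hprod, count_leftInvSeq_braid]
  simp

def parityRep : W →* Equiv.Perm (W × ZMod 2) :=
  cs.lift ⟨parityPerm cs, isLiftable_parityPerm cs⟩

theorem parityRep_wordProd (ω : List B) :
    parityRep cs (cs.wordProd ω) = (ω.map (parityPerm cs)).prod := by
  rw [wordProd, map_list_prod, List.map_map]
  congr 1
  exact List.map_congr_left fun i _ => cs.lift_apply_simple (isLiftable_parityPerm cs) i

/-- The parity of the number of occurrences of `t` in the left inversion sequence of any word
for `g`. -/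
def inversionParity (g t : W) : ZMod 2 :=
  (parityRep cs g (g⁻¹ * t * g, 0)).2

theorem inversionParity_wordProd (ω : List B) (t : W) :
    inversionParity cs (cs.wordProd ω) t = (cs.leftInvSeq ω).count t := by
  simp [inversionParity, parityRep_wordProd, prod_map_parityPerm_apply, mul_assoc]

theorem parityRep_apply (g x : W) (e : ZMod 2) :
    parityRep cs g (x, e) = (g * x * g⁻¹, e + inversionParity cs g (g * x * g⁻¹)) := by
  obtain ⟨ω, rfl⟩ := cs.wordProd_surjective g
  simp [inversionParity, parityRep_wordProd, prod_map_parityPerm_apply, mul_assoc]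

theorem inversionParity_mul (g h t : W) :
    inversionParity cs (g * h) t =
      inversionParity cs g t + inversionParity cs h (g⁻¹ * t * g) := by
  set x := (g * h)⁻¹ * t * (g * h)
  have key : parityRep cs (g * h) (x, 0) = parityRep cs g (parityRep cs h (x, 0)) := by
    rw [map_mul, Equiv.Perm.mul_apply]
  have e1 : g * h * x * (g * h)⁻¹ = t := by simp only [x]; group
  have e2 : h * x * h⁻¹ = g⁻¹ * t * g := by simp only [x]; group
  have e3 : g * (g⁻¹ * t * g) * g⁻¹ = t := by group
  rw [parityRep_apply, parityRep_apply cs h, e1, e2, parityRep_apply, e3] at key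
  have := congrArg Prod.snd key
  simp only [zero_add] at this
  rw [this, add_comm]

theorem inversionParity_one (t : W) : inversionParity cs 1 t = 0 := by
  simpa using inversionParity_wordProd cs [] t

theorem inversionParity_simple_self (i : B) :
    inversionParity cs (cs.simple i) (cs.simple i) = 1 := by
  simpa using inversionParity_wordProd cs [i] (cs.simple i)

theorem inversionParity_self_of_isReflection {t : W} (ht : cs.IsReflection t) :
    inversionParity cs t t = 1 := by
  obtain ⟨g, i, rfl⟩ := ht
  have hconj : g⁻¹ * (g * cs.simple i * g⁻¹) * g = cs.simple i := by group
  have h1 := inversionParity_mul cs g (cs.simple i * g⁻¹) (g * cs.simple i * g⁻¹)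
  have h2 := inversionParity_mul cs (cs.simple i) g⁻¹ (cs.simple i)
  have h3 := inversionParity_mul cs g g⁻¹ (g * cs.simple i * g⁻¹)
  rw [← mul_assoc g, hconj] at h1
  rw [hconj, mul_inv_cancel, inversionParity_one] at h3
  rw [inv_simple, cs.simple_mul_simple_self, one_mul] at h2
  rw [h1, h2, inversionParity_simple_self]
  linear_combination -h3

theorem inversionParity_eq_one_of_isLeftInversion {w t : W} (ht : cs.IsLeftInversion w t) :
    inversionParity cs w t = 1 := by
  obtain ⟨ω, hω, htw⟩ := cs.exists_isReduced (t * w)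
  have hnot : t ∉ cs.leftInvSeq ω := fun hmem => by
    have := (cs.isLeftInversion_of_mem_leftInvSeq hω hmem).2
    rw [← htw, ← mul_assoc, ht.1.mul_self, one_mul] at this
    exact lt_asymm this ht.2
  have h := inversionParity_mul cs t (t * w) t
  rw [← mul_assoc, ht.1.mul_self, one_mul, inv_mul_cancel, one_mul, htw,
    inversionParity_wordProd, List.count_eq_zero_of_not_mem hnot] at h
  rw [h, inversionParity_self_of_isReflection cs ht.1, Nat.cast_zero, add_zero]

end ParityRepresentation

section Exchange

variable (cs : CoxeterSystem M W)

/-- The strong exchange property. -/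
theorem mem_leftInvSeq_of_isLeftInversion {ω : List B} {t : W}
    (ht : cs.IsLeftInversion (cs.wordProd ω) t) : t ∈ cs.leftInvSeq ω := by
  classical
  have h := inversionParity_eq_one_of_isLeftInversion cs ht
  rw [inversionParity_wordProd] at h
  exact List.count_pos_iff.mp (Nat.pos_of_ne_zero fun h0 => by simp [h0] at h)

theorem mem_rightInvSeq_of_isRightInversion {ω : List B} {t : W}
    (ht : cs.IsRightInversion (cs.wordProd ω) t) : t ∈ cs.rightInvSeq ω := by
  have h := mem_leftInvSeq_of_isLeftInversion cs (ω := ω.reverse)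
    (by rwa [wordProd_reverse, isLeftInversion_inv_iff])
  rwa [leftInvSeq_reverse, List.mem_reverse] at h

theorem exists_eraseIdx_of_isLeftInversion {ω : List B} {t : W}
    (ht : cs.IsLeftInversion (cs.wordProd ω) t) :
    ∃ j < ω.length, t * cs.wordProd ω = cs.wordProd (ω.eraseIdx j) := by
  obtain ⟨j, hj, rfl⟩ := List.mem_iff_getElem.mp (mem_leftInvSeq_of_isLeftInversion cs ht)
  refine ⟨j, by simpa using hj, ?_⟩
  rw [← List.getD_eq_getElem _ 1, getD_leftInvSeq_mul_wordProd]

theorem exists_eraseIdx_of_isRightInversion {ω : List B} {t : W}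
    (ht : cs.IsRightInversion (cs.wordProd ω) t) :
    ∃ j < ω.length, cs.wordProd ω * t = cs.wordProd (ω.eraseIdx j) := by
  obtain ⟨j, hj, rfl⟩ := List.mem_iff_getElem.mp (mem_rightInvSeq_of_isRightInversion cs ht)
  refine ⟨j, by simpa using hj, ?_⟩
  rw [← List.getD_eq_getElem _ 1, wordProd_mul_getD_rightInvSeq]

theorem exists_isReduced_sublist (ω : List B) :
    ∃ η, η <+ ω ∧ cs.IsReduced η ∧ cs.wordProd η = cs.wordProd ω := by
  induction ω with
  | nil => exact ⟨[], List.Sublist.refl _, by simp [CoxeterSystem.IsReduced], rfl⟩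
  | cons a ω ih =>
    obtain ⟨η, hsub, hred, hprod⟩ := ih
    by_cases hdesc : cs.IsLeftDescent (cs.wordProd η) a
    · obtain ⟨j, hj, hj'⟩ := exists_eraseIdx_of_isLeftInversion cs
        ((cs.isLeftInversion_simple_iff_isLeftDescent _ a).mpr hdesc)
      refine ⟨η.eraseIdx j, (List.eraseIdx_sublist η j).trans (hsub.cons a), ?_, ?_⟩
      · rw [CoxeterSystem.IsReduced, ← hj', List.length_eraseIdx_of_lt hj]
        rw [isLeftDescent_iff, hred] at hdesc
        omega
      · rw [← hj', hprod, wordProd_cons]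
    · refine ⟨a :: η, hsub.cons_cons a, ?_, by rw [wordProd_cons, wordProd_cons, hprod]⟩
      rw [CoxeterSystem.IsReduced, wordProd_cons, List.length_cons, ← hred]
      exact cs.not_isLeftDescent_iff.mp hdesc

end Exchange

namespace BruhatLE

variable {cs : CoxeterSystem M W} {u v : W}

theorem trans {w : W} (h₁ : BruhatLE cs u v) (h₂ : BruhatLE cs v w) : BruhatLE cs u w :=
  Relation.ReflTransGen.trans h₁ h₂

theorem length_le (h : BruhatLE cs u v) : cs.length u ≤ cs.length v := by
  induction h with
  | refl => exact le_rfl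
  | tail _ hstep ih => obtain ⟨t, -, -, hlt⟩ := hstep; omega

theorem eq_of_length_le (h : BruhatLE cs u v) (hlen : cs.length v ≤ cs.length u) : u = v := by
  rcases Relation.ReflTransGen.cases_head h with rfl | ⟨z, ⟨t, -, -, hlt⟩, hzv⟩
  · rfl
  · have := length_le hzv; omega

theorem exists_reflection_of_length_eq_add_one (h : BruhatLE cs u v)
    (hlen : cs.length v = cs.length u + 1) : ∃ t, cs.IsReflection t ∧ v = t * u := by
  rcases Relation.ReflTransGen.cases_head h with rfl | ⟨z, ⟨t, ht, rfl, hlt⟩, hzv⟩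
  · omega
  · exact ⟨t, ht, (eq_of_length_le hzv (by have := length_le hzv; omega)).symm⟩

theorem inv (h : BruhatLE cs u v) : BruhatLE cs u⁻¹ v⁻¹ := by
  induction h with
  | refl => exact Relation.ReflTransGen.refl
  | @tail b c _ hstep ih =>
    obtain ⟨t, ht, rfl, hlt⟩ := hstep
    refine ih.tail ⟨b⁻¹ * t * b, by simpa using ht.conj b⁻¹, ?_, ?_⟩
    · rw [mul_inv_rev, ht.inv]
      group
    · rwa [cs.length_inv, cs.length_inv]

/-- The subword property. -/
theorem exists_sublist (h : BruhatLE cs u v) {Ω : List B}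
    (hΩ : cs.IsReduced Ω) (hv : cs.wordProd Ω = v) :
    ∃ η, η <+ Ω ∧ cs.IsReduced η ∧ cs.wordProd η = u := by
  induction h using Relation.ReflTransGen.head_induction_on with
  | refl => exact ⟨Ω, List.Sublist.refl _, hΩ, hv⟩
  | @head a _ hstep _ ih =>
    obtain ⟨ζ, hζΩ, hζ, rfl⟩ := ih
    obtain ⟨t, ht, hζt, hlt⟩ := hstep
    have htζ : t * cs.wordProd ζ = a := by rw [hζt, ← mul_assoc, ht.mul_self, one_mul]
    obtain ⟨j, -, hj⟩ := exists_eraseIdx_of_isLeftInversion cs (ω := ζ) ⟨ht, htζ ▸ hlt⟩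
    obtain ⟨η, hηζ, hη, hηprod⟩ := exists_isReduced_sublist cs (ζ.eraseIdx j)
    refine ⟨η, hηζ.trans ((List.eraseIdx_sublist ζ j).trans hζΩ), hη, ?_⟩
    rw [hηprod, ← hj, htζ]

end BruhatLE

section Bruhat

variable (cs : CoxeterSystem M W)

theorem wordProd_le_wordProd_cons {a : B} {ω : List B} (hred : cs.IsReduced (a :: ω)) :
    BruhatLE cs (cs.wordProd ω) (cs.wordProd (a :: ω)) := by
  refine .single ⟨cs.simple a, cs.isReflection_simple a, wordProd_cons .., ?_⟩
  rw [hred, List.length_cons]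
  exact Nat.lt_succ_of_le (cs.length_wordProd_le ω)

theorem wordProd_le_wordProd_append_left {α β : List B} (hred : cs.IsReduced (α ++ β)) :
    BruhatLE cs (cs.wordProd β) (cs.wordProd (α ++ β)) := by
  induction α with
  | nil => exact Relation.ReflTransGen.refl
  | cons a α ih =>
    exact (ih (by simpa using hred.drop 1)).trans (wordProd_le_wordProd_cons cs hred)

theorem wordProd_le_wordProd_append_right {α β : List B} (hred : cs.IsReduced (α ++ β)) :
    BruhatLE cs (cs.wordProd α) (cs.wordProd (α ++ β)) := by
  have h := (wordProd_le_wordProd_append_left cs (α := β.reverse) (β := α.reverse)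
    (by simpa using hred.reverse)).inv
  rwa [← List.reverse_append, wordProd_reverse, wordProd_reverse, inv_inv, inv_inv] at h

theorem isReduced_of_isReduced_append_append {ξ μ υ : List B}
    (hred : cs.IsReduced (ξ ++ μ ++ υ)) : cs.IsReduced μ := by
  have h := (hred.take (ξ ++ μ).length).drop ξ.length
  rwa [List.take_left, List.drop_left] at h

theorem isLeftDescent_wordProd_cons {a : B} {ω : List B} (hred : cs.IsReduced (a :: ω)) :
    cs.IsLeftDescent (cs.wordProd (a :: ω)) a := by
  rw [IsLeftDescent, wordProd_cons, simple_mul_simple_cancel_left, ← wordProd_cons, hred,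
    List.length_cons]
  exact Nat.lt_succ_of_le (cs.length_wordProd_le ω)

theorem isRightDescent_wordProd_append_singleton {a : B} {ω : List B}
    (hred : cs.IsReduced (ω ++ [a])) : cs.IsRightDescent (cs.wordProd (ω ++ [a])) a := by
  rw [IsRightDescent, wordProd_append, wordProd_singleton, simple_mul_simple_cancel_right,
    ← wordProd_singleton, ← wordProd_append, hred, List.length_append, List.length_singleton]
  exact Nat.lt_succ_of_le (cs.length_wordProd_le ω)

theorem simple_le_of_mem {ω : List B} (hred : cs.IsReduced ω) {c : B} (hc : c ∈ ω) :
    BruhatLE cs (cs.simple c) (cs.wordProd ω) := by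
  obtain ⟨α, β, rfl⟩ := List.append_of_mem hc
  have hcβ : cs.IsReduced ([c] ++ β) := by simpa using hred.drop α.length
  have h := wordProd_le_wordProd_append_right cs hcβ
  rw [wordProd_singleton] at h
  exact h.trans (wordProd_le_wordProd_append_left cs hred)

theorem simple_le_of_isLeftDescent {z : W} {i : B} (h : cs.IsLeftDescent z i) :
    BruhatLE cs (cs.simple i) z := by
  obtain ⟨μ, hμ, hμz⟩ := cs.exists_isReduced (cs.simple i * z)
  have hz : z = cs.wordProd (i :: μ) := by
    rw [wordProd_cons, ← hμz, simple_mul_simple_cancel_left]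
  rw [cs.isLeftDescent_iff, hμz, hμ] at h
  rw [hz]
  exact simple_le_of_mem cs (by rw [CoxeterSystem.IsReduced, ← hz, List.length_cons]; omega)
    List.mem_cons_self

theorem simple_le_of_isRightDescent {z : W} {i : B} (h : cs.IsRightDescent z i) :
    BruhatLE cs (cs.simple i) z := by
  have h' := (simple_le_of_isLeftDescent cs (cs.isLeftDescent_inv_iff.mpr h)).inv
  rwa [inv_simple, inv_inv] at h'

theorem wordProd_eraseIdx_le {ω : List B} (hred : cs.IsReduced ω) {j : ℕ}
    (hj : j < ω.length) :
    BruhatLE cs (cs.wordProd (ω.eraseIdx j)) (cs.wordProd ω) := by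
  have hmem : (cs.leftInvSeq ω).getD j 1 ∈ cs.leftInvSeq ω := by
    rw [List.getD_eq_getElem _ _ (by simpa using hj)]
    exact List.getElem_mem _
  set t := (cs.leftInvSeq ω).getD j 1
  have ht : cs.IsReflection t := cs.isReflection_of_mem_leftInvSeq ω hmem
  refine Relation.ReflTransGen.single ⟨t, ht, ?_, ?_⟩
  · rw [← getD_leftInvSeq_mul_wordProd, ← mul_assoc, ht.mul_self, one_mul]
  · rw [hred]
    calc cs.length (cs.wordProd (ω.eraseIdx j))
        _ ≤ (ω.eraseIdx j).length := cs.length_wordProd_le _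
        _ < ω.length := by rw [List.length_eraseIdx_of_lt hj]; omega

theorem exists_mem_of_simple_le {ω : List B} (hω : cs.IsReduced ω) {c : B}
    (h : BruhatLE cs (cs.simple c) (cs.wordProd ω)) : ∃ c' ∈ ω, cs.simple c' = cs.simple c := by
  obtain ⟨η, hηω, hη, hηc⟩ := h.exists_sublist hω rfl
  obtain ⟨c', rfl⟩ := List.length_eq_one_iff.mp (by rw [← hη.eq, hηc, cs.length_simple])
  exact ⟨c', hηω.subset (List.mem_singleton_self c'), by simpa using hηc⟩

end Bruhat

section Parabolic

variable (cs : CoxeterSystem M W) {I J : Set B}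

theorem simple_mem_parabolic {i : B} (hi : i ∈ I) : cs.simple i ∈ parabolic cs I :=
  Subgroup.subset_closure (Set.mem_image_of_mem _ hi)

theorem wordProd_mem_parabolic {α : List B} (hα : ∀ a ∈ α, a ∈ I) :
    cs.wordProd α ∈ parabolic cs I :=
  Subgroup.list_prod_mem _ fun _ hx => by
    obtain ⟨a, ha, rfl⟩ := List.mem_map.mp hx
    exact simple_mem_parabolic cs (hα a ha)

theorem exists_isReduced_of_mem_parabolic {g : W} (hg : g ∈ parabolic cs I) :
    ∃ α : List B, (∀ a ∈ α, a ∈ I) ∧ cs.IsReduced α ∧ cs.wordProd α = g := by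
  obtain ⟨α, hαI, rfl⟩ : ∃ α : List B, (∀ a ∈ α, a ∈ I) ∧ cs.wordProd α = g := by
    induction hg using Subgroup.closure_induction_left with
    | one => exact ⟨[], by simp, rfl⟩
    | mul_left _ hx _ _ ih =>
      obtain ⟨i, hi, rfl⟩ := hx
      obtain ⟨α, hα, rfl⟩ := ih
      exact ⟨i :: α, by simpa [hi] using hα, wordProd_cons ..⟩
    | inv_mul_cancel _ hx _ _ ih =>
      obtain ⟨i, hi, rfl⟩ := hx
      obtain ⟨α, hα, rfl⟩ := ih
      exact ⟨i :: α, by simpa [hi] using hα, by rw [inv_simple, wordProd_cons]⟩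
  obtain ⟨η, hηα, hη, hprod⟩ := exists_isReduced_sublist cs α
  exact ⟨η, fun a ha => hαI a (hηα.subset ha), hη, hprod⟩

/-- `z ∈ ^I W`. -/
def LeftReduced (I : Set B) (z : W) : Prop :=
  ∀ i ∈ I, ¬ cs.IsLeftDescent z i

/-- `z ∈ W^J`. -/
def RightReduced (J : Set B) (z : W) : Prop :=
  ∀ j ∈ J, ¬ cs.IsRightDescent z j

theorem length_mul_of_forall_length_le {d : W}
    (hd : ∀ y ∈ parabolic cs J, cs.length d ≤ cs.length (d * y)) {y : W}
    (hy : y ∈ parabolic cs J) : cs.length (d * y) = cs.length d + cs.length y := by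
  obtain ⟨α, hαJ, hα, rfl⟩ := exists_isReduced_of_mem_parabolic cs hy
  clear hy
  rw [hα]
  induction α using List.reverseRecOn with
  | nil => simp
  | append_singleton α j ih =>
    have hα' : cs.IsReduced α := by simpa using hα.take α.length
    have hαJ' : ∀ a ∈ α, a ∈ J := fun a ha => hαJ a (by simp [ha])
    have ih := ih hαJ' hα'
    rw [wordProd_append, wordProd_singleton, ← mul_assoc, List.length_append,
      List.length_singleton]
    rcases cs.length_mul_simple (d * cs.wordProd α) j with hup | hdown
    · omega
    exfalso
    obtain ⟨δ, hδ, rfl⟩ := cs.exists_isReduced d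
    obtain ⟨k, hk, hk'⟩ := exists_eraseIdx_of_isRightInversion cs (ω := δ ++ α)
      (t := cs.simple j) ⟨cs.isReflection_simple j, by rw [wordProd_append]; omega⟩
    rw [wordProd_append] at hk'
    rcases lt_or_ge k δ.length with hkδ | hkδ
    · -- the letter is deleted from `δ`: `d` is shortened by an element of `W_J`
      rw [List.eraseIdx_append_of_lt_length hkδ, wordProd_append] at hk'
      have hconj : cs.wordProd α * cs.simple j * (cs.wordProd α)⁻¹ ∈ parabolic cs J :=
        mul_mem (mul_mem (wordProd_mem_parabolic cs hαJ')
          (simple_mem_parabolic cs (hαJ j (by simp)))) (inv_mem (wordProd_mem_parabolic cs hαJ'))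
      have hshort : cs.wordProd δ * (cs.wordProd α * cs.simple j * (cs.wordProd α)⁻¹) =
          cs.wordProd (δ.eraseIdx k) := by
        rw [← mul_assoc, ← mul_assoc, hk']
        group
      have h1 := hd _ hconj
      have h2 := cs.length_wordProd_le (δ.eraseIdx k)
      rw [hshort, hδ] at h1
      rw [List.length_eraseIdx_of_lt hkδ] at h2
      omega
    · -- the letter is deleted from `α`: contradicts reducedness of `α ++ [j]`
      rw [List.eraseIdx_append_of_length_le hkδ, wordProd_append, mul_assoc] at hk'
      have h1 := cs.length_wordProd_le (α.eraseIdx (k - δ.length))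
      rw [← mul_left_cancel hk', ← wordProd_singleton, ← wordProd_append, hα,
        List.length_eraseIdx_of_lt (by simp at hk; omega), List.length_append,
        List.length_singleton] at h1
      omega
    

theorem RightReduced.length_mul {d : W} (hd : RightReduced cs J d) {y : W}
    (hy : y ∈ parabolic cs J) : cs.length (d * y) = cs.length d + cs.length y := by
  obtain ⟨y₀, hy₀, hmin⟩ := (InvImage.wf (fun y => cs.length (d * y)) wellFounded_lt).has_min
    (parabolic cs J : Set W) ⟨1, one_mem _⟩
  have hmin' : ∀ y ∈ parabolic cs J, cs.length (d * y₀) ≤ cs.length (d * y₀ * y) := by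
    intro y hy
    have := hmin _ (mul_mem hy₀ hy)
    simp only [InvImage, not_lt] at this
    rwa [mul_assoc]
  -- `d * y₀` is the shortest element of `d W_J`; it has to be `d` itself
  suffices y₀ = 1 by simpa [this] using length_mul_of_forall_length_le cs hmin' hy
  by_contra hne
  obtain ⟨α, hαJ, hα, hαy⟩ := exists_isReduced_of_mem_parabolic cs (inv_mem hy₀)
  obtain ⟨β, j, rfl⟩ := (List.eq_nil_or_concat' α).resolve_left fun h => hne (by
    rw [h, wordProd_nil, eq_comm, inv_eq_one] at hαy; exact hαy)
  have hβ : cs.IsReduced β := by simpa using hα.take β.length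
  have h1 := length_mul_of_forall_length_le cs hmin' (inv_mem hy₀)
  have h2 := length_mul_of_forall_length_le cs hmin'
    (wordProd_mem_parabolic cs (α := β) fun a ha => hαJ a (by simp [ha]))
  have hβy : cs.wordProd β = y₀⁻¹ * cs.simple j := by
    rw [← hαy, wordProd_append, wordProd_singleton, simple_mul_simple_cancel_right]
  have hds : d * cs.simple j = d * y₀ * cs.wordProd β := by rw [hβy]; group
  apply hd j (hαJ j (by simp))
  rw [IsRightDescent, hds, h2, hβ]
  rw [mul_inv_cancel_right, ← hαy, hα, List.length_append, List.length_singleton] at h1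
  omega

theorem LeftReduced.length_mul {d : W} (hd : LeftReduced cs I d) {x : W}
    (hx : x ∈ parabolic cs I) : cs.length (x * d) = cs.length x + cs.length d := by
  have hd' : RightReduced cs I d⁻¹ := fun i hi h => hd i hi (cs.isRightDescent_inv_iff.mp h)
  have := hd'.length_mul cs (inv_mem hx)
  rwa [← mul_inv_rev, cs.length_inv, cs.length_inv, cs.length_inv, add_comm] at this

theorem RightReduced.simple_mul_of_isLeftDescent {m : W} (hm : RightReduced cs J m) {i : B}
    (hi : cs.IsLeftDescent m i) : RightReduced cs J (cs.simple i * m) := by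
  intro j hj hdesc
  apply hm j hj
  have := cs.length_simple_mul (m * cs.simple j) i
  rw [IsLeftDescent] at hi
  rw [IsRightDescent, mul_assoc] at hdesc
  rw [IsRightDescent]
  omega

/-- Deodhar's lemma. -/
theorem RightReduced.simple_mul_or {m : W} (hm : RightReduced cs J m) (i : B) :
    RightReduced cs J (cs.simple i * m) ∨ ∃ j ∈ J, cs.simple i * m = m * cs.simple j := by
  by_cases hi : cs.IsLeftDescent m i
  · exact Or.inl (hm.simple_mul_of_isLeftDescent cs hi)
  refine or_iff_not_imp_left.mpr fun hred => ?_
  simp only [RightReduced, not_forall, not_not] at hred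
  obtain ⟨j, hj, hdesc⟩ := hred
  obtain ⟨μ, hμ, rfl⟩ := cs.exists_isReduced m
  obtain ⟨k, hk, hk'⟩ := exists_eraseIdx_of_isRightInversion cs (ω := i :: μ)
    ⟨cs.isReflection_simple j, by rwa [wordProd_cons]⟩
  rcases k with _ | k
  · refine ⟨j, hj, ?_⟩
    rw [List.eraseIdx_cons_zero, wordProd_cons] at hk'
    nth_rewrite 2 [← hk']
    rw [simple_mul_simple_cancel_right]
  · exfalso
    rw [List.eraseIdx_cons_succ, wordProd_cons, wordProd_cons, mul_assoc] at hk'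
    apply hm j hj
    have h1 := cs.length_wordProd_le (μ.eraseIdx k)
    rw [List.length_eraseIdx_of_lt (by simp at hk; omega)] at h1
    rw [IsRightDescent, mul_left_cancel hk', hμ]
    have : 0 < μ.length := by simp at hk; omega
    omega

theorem RightReduced.exists_mul_eq {n : W} (hn : RightReduced cs J n) {x : W}
    (hx : x ∈ parabolic cs I) :
    ∃ x' ∈ parabolic cs I, ∃ y ∈ parabolic cs J, RightReduced cs J (x' * n) ∧
      x * n = x' * n * y := by
  have step : ∀ i ∈ I, ∀ x : W, (∃ x' ∈ parabolic cs I, ∃ y ∈ parabolic cs J,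
      RightReduced cs J (x' * n) ∧ x * n = x' * n * y) →
      ∃ x' ∈ parabolic cs I, ∃ y ∈ parabolic cs J,
      RightReduced cs J (x' * n) ∧ cs.simple i * x * n = x' * n * y := by
    rintro i hi x ⟨x', hx', y, hy, hred, heq⟩
    rcases hred.simple_mul_or cs i with hred' | ⟨j, hj, hswap⟩
    · refine ⟨cs.simple i * x', mul_mem (simple_mem_parabolic cs hi) hx', y, hy, ?_, ?_⟩
      · rwa [mul_assoc]
      · rw [mul_assoc, heq]
        group
    · refine ⟨x', hx', cs.simple j * y, mul_mem (simple_mem_parabolic cs hj) hy, hred, ?_⟩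
      rw [mul_assoc, heq, show cs.simple i * (x' * n * y) = cs.simple i * (x' * n) * y by group,
        hswap]
      group
  induction hx using Subgroup.closure_induction_left with
  | one => exact ⟨1, one_mem _, 1, one_mem _, by simpa using hn, by simp⟩
  | mul_left _ hg x _ ih =>
    obtain ⟨i, hi, rfl⟩ := hg
    exact step i hi x ih
  | inv_mul_cancel _ hg x _ ih =>
    obtain ⟨i, hi, rfl⟩ := hg
    rw [inv_simple]
    exact step i hi x ih

theorem mem_doubleCoset_self (I J : Set B) (u : W) : u ∈ doubleCoset cs I J u :=
  ⟨1, one_mem _, 1, one_mem _, by simp⟩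

theorem doubleCoset_eq_of_mem {u z : W} (hz : z ∈ doubleCoset cs I J u) :
    doubleCoset cs I J z = doubleCoset cs I J u := by
  obtain ⟨x, hx, y, hy, rfl⟩ := hz
  ext v
  constructor
  · rintro ⟨a, ha, b, hb, rfl⟩
    exact ⟨a * x, mul_mem ha hx, y * b, mul_mem hy hb, by group⟩
  · rintro ⟨a, ha, b, hb, rfl⟩
    exact ⟨a * x⁻¹, mul_mem ha (inv_mem hx), y⁻¹ * b, mul_mem (inv_mem hy) hb, by group⟩

theorem mem_doubleCoset_comm {u z : W} (hz : z ∈ doubleCoset cs I J u) :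
    u ∈ doubleCoset cs I J z :=
  doubleCoset_eq_of_mem cs hz ▸ mem_doubleCoset_self cs I J u

theorem wordProd_append_append_mem_doubleCoset {ξ υ : List B} (hξ : ∀ a ∈ ξ, a ∈ I)
    (hυ : ∀ a ∈ υ, a ∈ J) (μ : List B) :
    cs.wordProd (ξ ++ μ ++ υ) ∈ doubleCoset cs I J (cs.wordProd μ) :=
  ⟨_, wordProd_mem_parabolic cs hξ, _, wordProd_mem_parabolic cs hυ, by
    rw [wordProd_append, wordProd_append]⟩

theorem exists_length_eq_add_of_mem_doubleCoset {m z : W} (hmI : LeftReduced cs I m)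
    (hmJ : RightReduced cs J m) (hz : z ∈ doubleCoset cs I J m) :
    ∃ x ∈ parabolic cs I, ∃ y ∈ parabolic cs J, z = x * m * y ∧
      cs.length z = cs.length x + cs.length m + cs.length y := by
  obtain ⟨x, hx, y, hy, rfl⟩ := hz
  obtain ⟨x', hx', y', hy', hred, heq⟩ := hmJ.exists_mul_eq cs hx
  have hz : x * m * y = x' * m * (y' * y) := by rw [heq]; group
  refine ⟨x', hx', y' * y, mul_mem hy' hy, hz, ?_⟩
  rw [hz, hred.length_mul cs (mul_mem hy' hy), hmI.length_mul cs hx']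

theorem length_le_of_mem_doubleCoset {m z : W} (hmI : LeftReduced cs I m)
    (hmJ : RightReduced cs J m) (hz : z ∈ doubleCoset cs I J m) : cs.length m ≤ cs.length z := by
  obtain ⟨x, -, y, -, -, hlen⟩ := exists_length_eq_add_of_mem_doubleCoset cs hmI hmJ hz
  omega

theorem exists_isReduced_append_of_mem_doubleCoset {m z : W} (hmI : LeftReduced cs I m)
    (hmJ : RightReduced cs J m) (hz : z ∈ doubleCoset cs I J m) :
    ∃ ξ μ υ : List B, (∀ a ∈ ξ, a ∈ I) ∧ (∀ a ∈ υ, a ∈ J) ∧ cs.IsReduced (ξ ++ μ ++ υ) ∧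
      cs.wordProd (ξ ++ μ ++ υ) = z ∧ cs.wordProd μ = m := by
  obtain ⟨x, hx, y, hy, rfl, hlen⟩ := exists_length_eq_add_of_mem_doubleCoset cs hmI hmJ hz
  obtain ⟨ξ, hξI, hξ, rfl⟩ := exists_isReduced_of_mem_parabolic cs hx
  obtain ⟨υ, hυJ, hυ, rfl⟩ := exists_isReduced_of_mem_parabolic cs hy
  obtain ⟨μ, hμ, rfl⟩ := cs.exists_isReduced m
  have hprod : cs.wordProd (ξ ++ μ ++ υ) = cs.wordProd ξ * cs.wordProd μ * cs.wordProd υ := by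
    rw [wordProd_append, wordProd_append]
  refine ⟨ξ, μ, υ, hξI, hυJ, ?_, hprod, rfl⟩
  rw [CoxeterSystem.IsReduced, hprod, hlen, hξ, hμ, hυ, List.length_append, List.length_append]

theorem le_of_mem_doubleCoset {m z : W} (hmI : LeftReduced cs I m) (hmJ : RightReduced cs J m)
    (hz : z ∈ doubleCoset cs I J m) : BruhatLE cs m z := by
  obtain ⟨ξ, μ, υ, -, -, hred, rfl, rfl⟩ :=
    exists_isReduced_append_of_mem_doubleCoset cs hmI hmJ hz
  have hξμ := hred.take (ξ ++ μ).length
  rw [List.take_left] at hξμ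
  exact (wordProd_le_wordProd_append_left cs hξμ).trans
    (wordProd_le_wordProd_append_right cs hred)

theorem leftReduced_rightReduced_of_forall_length_le {u p : W} (hp : p ∈ doubleCoset cs I J u)
    (hmin : ∀ z ∈ doubleCoset cs I J u, cs.length p ≤ cs.length z) :
    LeftReduced cs I p ∧ RightReduced cs J p := by
  obtain ⟨x, hx, y, hy, rfl⟩ := hp
  refine ⟨fun i hi hdesc => ?_, fun j hj hdesc => ?_⟩
  · exact not_lt.mpr (hmin (cs.simple i * (x * u * y))
      ⟨cs.simple i * x, mul_mem (simple_mem_parabolic cs hi) hx, y, hy, by group⟩) hdesc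
  · exact not_lt.mpr (hmin (x * u * y * cs.simple j)
      ⟨x, hx, y * cs.simple j, mul_mem hy (simple_mem_parabolic cs hj), by group⟩) hdesc

end Parabolic

section Separated

variable (cs : CoxeterSystem M W) {I J : Set B}

theorem leftReduced_of_le {p z : W} (hz : ∀ i ∈ I, ¬ BruhatLE cs (cs.simple i) z)
    (hpz : BruhatLE cs p z) : LeftReduced cs I p :=
  fun i hi hdesc => hz i hi ((simple_le_of_isLeftDescent cs hdesc).trans hpz)

theorem rightReduced_of_le {p z : W} (hz : ∀ j ∈ J, ¬ BruhatLE cs (cs.simple j) z)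
    (hpz : BruhatLE cs p z) : RightReduced cs J p :=
  fun j hj hdesc => hz j hj ((simple_le_of_isRightDescent cs hdesc).trans hpz)

theorem exists_sublist_of_le_wordProd_append {ξ μ υ : List B} (hξ : ∀ a ∈ ξ, a ∈ I)
    (hυ : ∀ a ∈ υ, a ∈ J) (hred : cs.IsReduced (ξ ++ μ ++ υ)) {z : W}
    (hzI : LeftReduced cs I z) (hzJ : RightReduced cs J z)
    (hz : BruhatLE cs z (cs.wordProd (ξ ++ μ ++ υ))) :
    ∃ η, η <+ μ ∧ cs.IsReduced η ∧ cs.wordProd η = z := by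
  obtain ⟨η, hη, hηred, rfl⟩ := hz.exists_sublist hred rfl
  obtain ⟨η₁₂, η₃, rfl, h₁₂, h₃⟩ := List.sublist_append_iff.mp hη
  obtain ⟨η₁, η₂, rfl, h₁, h₂⟩ := List.sublist_append_iff.mp h₁₂
  -- a letter kept from `ξ` or `υ` would give `z` a descent in `I` or `J`
  obtain rfl : η₁ = [] := by
    rcases η₁ with _ | ⟨a, η₁⟩
    · rfl
    · exact absurd (isLeftDescent_wordProd_cons cs hηred)
        (hzI a (hξ a (h₁.subset List.mem_cons_self)))
  obtain rfl : η₃ = [] := by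
    rcases List.eq_nil_or_concat' η₃ with h | ⟨η₃, b, rfl⟩
    · exact h
    · rw [← List.append_assoc] at hηred hzJ
      exact absurd (isRightDescent_wordProd_append_singleton cs hηred)
        (hzJ b (hυ b (h₃.subset (by simp))))
  exact ⟨η₂, h₂, by simpa using hηred, by simp⟩

theorem not_simple_le_of_le {m w z : W} (hm : ∀ c ∈ I ∪ J, ¬ BruhatLE cs (cs.simple c) m)
    (hw : w ∈ doubleCoset cs I J m) (hzI : LeftReduced cs I z) (hzJ : RightReduced cs J z)
    (hzw : BruhatLE cs z w) {c : B} (hc : c ∈ I ∪ J) : ¬ BruhatLE cs (cs.simple c) z := by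
  have hmI := leftReduced_of_le cs (fun i hi => hm i (Or.inl hi)) Relation.ReflTransGen.refl
  have hmJ := rightReduced_of_le cs (fun j hj => hm j (Or.inr hj)) Relation.ReflTransGen.refl
  obtain ⟨ξ, μ, υ, hξ, hυ, hred, rfl, rfl⟩ :=
    exists_isReduced_append_of_mem_doubleCoset cs hmI hmJ hw
  obtain ⟨η, hημ, hη, rfl⟩ := exists_sublist_of_le_wordProd_append cs hξ hυ hred hzI hzJ hzw
  have hμ := isReduced_of_isReduced_append_append cs hred
  intro hcz
  obtain ⟨c', hc', hcc'⟩ := exists_mem_of_simple_le cs hη hcz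
  exact hm c hc (hcc' ▸ simple_le_of_mem cs hμ (hημ.subset hc'))

theorem exists_le_of_cover_of_not_mem_doubleCoset {m u v : W} (hmI : LeftReduced cs I m)
    (hmJ : RightReduced cs J m) (hv : v ∈ doubleCoset cs I J m) (huv : BruhatLE cs u v)
    (hcov : cs.length v = cs.length u + 1) (hu : u ∉ doubleCoset cs I J m) :
    ∃ p, BruhatLE cs p m ∧ u ∈ doubleCoset cs I J p ∧
      cs.length u + cs.length m = cs.length v + cs.length p := by
  obtain ⟨t, ht, hvt⟩ := huv.exists_reflection_of_length_eq_add_one hcov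
  have hut : u = t * v := by rw [hvt, ← mul_assoc, ht.mul_self, one_mul]
  obtain ⟨ξ, μ, υ, hξ, hυ, hred, rfl, rfl⟩ :=
    exists_isReduced_append_of_mem_doubleCoset cs hmI hmJ hv
  obtain ⟨j, hj, hj'⟩ := exists_eraseIdx_of_isLeftInversion cs ⟨ht, by rw [← hut]; omega⟩
  rw [← hut] at hj'
  have hμ := isReduced_of_isReduced_append_append cs hred
  -- deleting a letter of `ξ` or `υ` would keep `u` in the double coset of `π μ`
  rcases lt_or_ge j (ξ ++ μ).length with hj₁ | hj₁
  · rw [List.eraseIdx_append_of_lt_length hj₁] at hj'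
    rcases lt_or_ge j ξ.length with hj₂ | hj₂
    · rw [List.eraseIdx_append_of_lt_length hj₂] at hj'
      exact absurd (hj' ▸ wordProd_append_append_mem_doubleCoset cs
        (fun a ha => hξ a ((List.eraseIdx_sublist ξ j).subset ha)) hυ μ) hu
    rw [List.eraseIdx_append_of_length_le hj₂] at hj'
    have hk : j - ξ.length < μ.length := by simp at hj₁; omega
    set e := μ.eraseIdx (j - ξ.length)
    refine ⟨cs.wordProd e, wordProd_eraseIdx_le cs hμ hk,
      hj' ▸ wordProd_append_append_mem_doubleCoset cs hξ hυ e, ?_⟩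
    -- `u = π ξ * π e * π υ` where `π e` is at most one letter shorter than `π μ`, and `u`
    -- is only one letter shorter than `v`: both inequalities are equalities
    have hue : u = cs.wordProd ξ * cs.wordProd e * cs.wordProd υ := by
      rw [hj', wordProd_append, wordProd_append]
    have hlen_v : cs.length (cs.wordProd (ξ ++ μ ++ υ)) = ξ.length + μ.length + υ.length := by
      rw [hred, List.length_append, List.length_append]
    have h1 := cs.length_mul_le (cs.wordProd ξ * cs.wordProd e) (cs.wordProd υ)
    have h2 := cs.length_mul_le (cs.wordProd ξ) (cs.wordProd e)
    have h3 := cs.length_wordProd_le e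
    have h4 := cs.length_wordProd_le ξ
    have h5 := cs.length_wordProd_le υ
    rw [List.length_eraseIdx_of_lt hk] at h3
    rw [← hue] at h1
    rw [hlen_v] at hcov
    rw [hμ, hlen_v]
    omega
  · rw [List.eraseIdx_append_of_length_le hj₁] at hj'
    exact absurd (hj' ▸ wordProd_append_append_mem_doubleCoset cs hξ
      (fun a ha => hυ a ((List.eraseIdx_sublist υ _).subset ha)) μ) hu

theorem side_eq_of_not_mem_doubleCoset {m w u v pu pv : W}
    (hm : ∀ c ∈ I ∪ J, ¬ BruhatLE cs (cs.simple c) m) (hw : w ∈ doubleCoset cs I J m)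
    (hv : BruhatLE cs v w) (huv : BruhatLE cs u v) (hcov : cs.length v = cs.length u + 1)
    (hpu : pu ∈ doubleCoset cs I J u)
    (hpu_min : ∀ x ∈ doubleCoset cs I J u, cs.length pu ≤ cs.length x)
    (hpv : pv ∈ doubleCoset cs I J v)
    (hpv_min : ∀ x ∈ doubleCoset cs I J v, cs.length pv ≤ cs.length x)
    (hne : u ∉ doubleCoset cs I J v) :
    cs.length u - cs.length pu = cs.length v - cs.length pv := by
  obtain ⟨hpvI, hpvJ⟩ := leftReduced_rightReduced_of_forall_length_le cs hpv hpv_min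
  have hvpv := mem_doubleCoset_comm cs hpv
  have hsep : ∀ c ∈ I ∪ J, ¬ BruhatLE cs (cs.simple c) pv := fun c hc =>
    not_simple_le_of_le cs hm hw hpvI hpvJ ((le_of_mem_doubleCoset cs hpvI hpvJ hvpv).trans hv) hc
  obtain ⟨p, hp, hup, hlen⟩ := exists_le_of_cover_of_not_mem_doubleCoset cs hpvI hpvJ hvpv huv
    hcov (doubleCoset_eq_of_mem cs hpv ▸ hne)
  have hpI := leftReduced_of_le cs (fun i hi => hsep i (Or.inl hi)) hp
  have hpJ := rightReduced_of_le cs (fun j hj => hsep j (Or.inr hj)) hp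
  have h1 := length_le_of_mem_doubleCoset cs hpI hpJ (doubleCoset_eq_of_mem cs hup ▸ hpu)
  have h2 := hpu_min p (mem_doubleCoset_comm cs hup)
  have h3 := hpu_min u (mem_doubleCoset_self cs I J u)
  have h4 := hpv_min v (mem_doubleCoset_self cs I J v)
  omega

end Separated

theorem separated_side_weakly_increasing_general (cs : CoxeterSystem M W) (w pw u v pu pv : W)
    (hpw : pw ∈ bCoset cs w w)
    (hsepL : leftDescents cs w ∩ support cs pw = ∅)
    (hsepR : rightDescents cs w ∩ support cs pw = ∅)
    (hv : BruhatLE cs v w)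
    (huv : BruhatLE cs u v) (hcov : cs.length v = cs.length u + 1)
    (hpu : pu ∈ bCoset cs w u) (hpu_min : ∀ x ∈ bCoset cs w u, cs.length pu ≤ cs.length x)
    (hpv : pv ∈ bCoset cs w v) (hpv_min : ∀ x ∈ bCoset cs w v, cs.length pv ≤ cs.length x) :
    (bCoset cs w u = bCoset cs w v ∧
      cs.length v - cs.length pv = (cs.length u - cs.length pu) + 1) ∨
    (bCoset cs w u ≠ bCoset cs w v ∧
      cs.length u - cs.length pu = cs.length v - cs.length pv) := by
  by_cases hc : bCoset cs w u = bCoset cs w v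
  · refine Or.inl ⟨hc, ?_⟩
    have h1 := hpu_min pv (hc ▸ hpv)
    have h2 := hpv_min pu (hc ▸ hpu)
    have h3 := hpu_min u (mem_doubleCoset_self cs _ _ u)
    omega
  · have hsep : ∀ c ∈ leftDescents cs w ∪ rightDescents cs w,
        ¬ BruhatLE cs (cs.simple c) pw := by
      rintro c (hcL | hcR) hc
      · exact Set.eq_empty_iff_forall_notMem.mp hsepL c ⟨hcL, hc⟩
      · exact Set.eq_empty_iff_forall_notMem.mp hsepR c ⟨hcR, hc⟩
    exact Or.inr ⟨hc, side_eq_of_not_mem_doubleCoset cs hsep (mem_doubleCoset_comm cs hpw) hv huv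
      hcov hpu hpu_min hpv hpv_min fun hu => hc (doubleCoset_eq_of_mem cs hu)⟩

/-- If `w` is separated and `u ⋖ v` is a Bruhat covering in `B(w)`, then either `u, v` lie in
the same Bruhat coset and `side_w(v) = side_w(u) + 1`, or they lie in different cosets and
`side_w(u) = side_w(v)`. -/
theorem separated_side_weakly_increasing (cs : CoxeterSystem M W) (w pw u v pu pv : W)
    (hpw : pw ∈ bCoset cs w w)
    (hpw_min : ∀ x ∈ bCoset cs w w, cs.length pw ≤ cs.length x)
    (hsepL : leftDescents cs w ∩ support cs pw = ∅)
    (hsepR : rightDescents cs w ∩ support cs pw = ∅)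
    (hu : BruhatLE cs u w) (hv : BruhatLE cs v w)
    (huv : BruhatLE cs u v) (hcov : cs.length v = cs.length u + 1)
    (hpu : pu ∈ bCoset cs w u) (hpu_min : ∀ x ∈ bCoset cs w u, cs.length pu ≤ cs.length x)
    (hpv : pv ∈ bCoset cs w v) (hpv_min : ∀ x ∈ bCoset cs w v, cs.length pv ≤ cs.length x) :
    (bCoset cs w u = bCoset cs w v ∧
      cs.length v - cs.length pv = (cs.length u - cs.length pu) + 1) ∨
    (bCoset cs w u ≠ bCoset cs w v ∧
      cs.length u - cs.length pu = cs.length v - cs.length pv) :=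
  separated_side_weakly_increasing_general cs w pw u v pu pv hpw hsepL hsepR hv huv hcov hpu hpu_min
    hpv hpv_min

end CoxeterBruhat
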